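/- arXiv:2406.06168 — 4 statements merged into one kernel-verified Lean document; each statement's English description precedes it below -/
import Mathlib

section
/- Let (X_t)_{t∈ℤ} be a centered stationary sequence of real-valued random variables with β-mixing coefficients (β(q))_{q≥1}, such that |X_t| ≤ M almost surely. Then for every n ∈ ℕ*, (1/n) E( (Σ_{j=1}^n X_j)² ) ≤ 4M² ∫_0^1 β^{-1}(u) du, where β^{-1}(u) = Σ_{k∈ℕ} 1_{β(k) > u} with the convention β(0) = 1. -/
open MeasureTheory ProbabilityTheory
open scoped ENNReal

noncomputable section

/-- β-dependence coefficient between two sub-σ-algebras. -/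
def betaDep {Ω : Type*} [MeasurableSpace Ω] (P : Measure Ω)
    (A B : MeasurableSpace Ω) : ℝ :=
  sSup {r : ℝ | ∃ (I J : ℕ) (As : Fin I → Set Ω) (Bs : Fin J → Set Ω),
    (∀ i, MeasurableSet[A] (As i)) ∧ (∀ j, MeasurableSet[B] (Bs j)) ∧
    Pairwise (Function.onFun Disjoint As) ∧ (⋃ i, As i) = Set.univ ∧
    Pairwise (Function.onFun Disjoint Bs) ∧ (⋃ j, Bs j) = Set.univ ∧
    r = 2⁻¹ * ∑ i, ∑ j,
      |(P (As i ∩ Bs j)).toReal - (P (As i)).toReal * (P (Bs j)).toReal|}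

/-- β-mixing coefficient of order `q` of a ℤ-indexed sequence. -/
def betaMixZ {Ω E : Type*} [MeasurableSpace Ω] [MeasurableSpace E]
    (P : Measure Ω) (X : ℤ → Ω → E) (q : ℕ) : ℝ :=
  ⨆ t : ℤ, betaDep P
    (⨆ s : {s : ℤ // s ≤ t}, MeasurableSpace.comap (X s) inferInstance)
    (⨆ s : {s : ℤ // t + q ≤ s}, MeasurableSpace.comap (X s) inferInstance)

/-- Stationarity of a ℤ-indexed sequence: every shift leaves the joint law invariant. -/
def StationaryZ {Ω E : Type*} [MeasurableSpace Ω] [MeasurableSpace E]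
    (P : Measure Ω) (X : ℤ → Ω → E) : Prop :=
  ∀ h : ℤ, Measure.map (fun ω (t : ℤ) => X (t + h) ω) P =
    Measure.map (fun ω (t : ℤ) => X t ω) P

/-!
If `f` is `A`-measurable and `g` is `B`-measurable, both with finitely many values bounded by `C`,
then `E fg - E f E g = ∑ᵢⱼ aᵢ bⱼ (P(Aᵢ ∩ Bⱼ) - P(Aᵢ) P(Bⱼ))` over the level sets, so
`|Cov(f, g)| ≤ 2 C² β(A, B)`. Rounding bounded `f`, `g` down to a grid of mesh `2C/m` changes the
covariance by `O(C²/m)`, so the bound holds for all bounded `f`, `g`. Applied to `X_j`, `X_k`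
with the past and future σ-algebras this gives `|E X_j X_k| ≤ 2M² β(|j - k|)`; expanding the
square, `E S_n² ≤ 4 M² n ∑_{d<n} β(d)`, and `β(d) = ∫₀¹ 1{u < β(d)} du` since `β(d) ∈ [0, 1]`.
-/

open Finset Function

section BetaDep

variable {Ω : Type*} {A B : MeasurableSpace Ω} [mΩ : MeasurableSpace Ω] {P : Measure Ω}

lemma sum_measureReal_inter_eq [IsFiniteMeasure P] {J : ℕ} {Bs : Fin J → Set Ω}
    (hBs : ∀ j, MeasurableSet (Bs j)) (hdisj : Pairwise (Disjoint on Bs))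
    (hcover : ⋃ j, Bs j = Set.univ) {s : Set Ω}
    (hs : MeasurableSet s) : ∑ j, P.real (s ∩ Bs j) = P.real s := by
  rw [← measureReal_iUnion_fintype
    (fun i j hij => (hdisj hij).mono Set.inter_subset_right Set.inter_subset_right)
    (fun j => hs.inter (hBs j)), ← Set.inter_iUnion, hcover, Set.inter_univ]

lemma half_sum_abs_measureReal_sub_le_one [IsProbabilityMeasure P] {I J : ℕ}
    {As : Fin I → Set Ω} {Bs : Fin J → Set Ω}
    (hAs : ∀ i, MeasurableSet (As i)) (hBs : ∀ j, MeasurableSet (Bs j))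
    (hdA : Pairwise (Disjoint on As)) (hcA : ⋃ i, As i = Set.univ)
    (hdB : Pairwise (Disjoint on Bs)) (hcB : ⋃ j, Bs j = Set.univ) :
    2⁻¹ * ∑ i, ∑ j, |P.real (As i ∩ Bs j) - P.real (As i) * P.real (Bs j)| ≤ 1 := by
  have hA1 : ∑ i, P.real (As i) = 1 := by
    simpa using sum_measureReal_inter_eq (P := P) hAs hdA hcA MeasurableSet.univ
  have hB1 : ∑ j, P.real (Bs j) = 1 := by
    simpa using sum_measureReal_inter_eq (P := P) hBs hdB hcB MeasurableSet.univ
  have hAB1 : ∑ i, ∑ j, P.real (As i ∩ Bs j) = 1 := by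
    simp_rw [sum_measureReal_inter_eq hBs hdB hcB (hAs _), hA1]
  have hsum : ∑ i, ∑ j, |P.real (As i ∩ Bs j) - P.real (As i) * P.real (Bs j)| ≤ 2 :=
    calc ∑ i, ∑ j, |P.real (As i ∩ Bs j) - P.real (As i) * P.real (Bs j)|
        ≤ ∑ i, ∑ j, (P.real (As i ∩ Bs j) + P.real (As i) * P.real (Bs j)) := by
          gcongr with i _ j _
          exact (abs_sub _ _).trans_eq (by rw [abs_of_nonneg measureReal_nonneg,
            abs_of_nonneg (mul_nonneg measureReal_nonneg measureReal_nonneg)])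
      _ = 2 := by
          simp_rw [sum_add_distrib, ← sum_mul_sum, hA1, hB1, hAB1]
          norm_num
  linarith

lemma betaDep_nonneg : 0 ≤ betaDep P A B := by
  refine Real.sSup_nonneg ?_
  rintro r ⟨I, J, As, Bs, -, -, -, -, -, -, rfl⟩
  positivity

lemma betaDep_le_one [IsProbabilityMeasure P] (hA : A ≤ mΩ) (hB : B ≤ mΩ) :
    betaDep P A B ≤ 1 := by
  refine Real.sSup_le ?_ zero_le_one
  rintro r ⟨I, J, As, Bs, hAs, hBs, hdA, hcA, hdB, hcB, rfl⟩
  exact half_sum_abs_measureReal_sub_le_one (fun i => hA _ (hAs i)) (fun j => hB _ (hBs j))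
    hdA hcA hdB hcB

lemma le_betaDep [IsProbabilityMeasure P] (hA : A ≤ mΩ) (hB : B ≤ mΩ) {I J : ℕ}
    {cf : Ω → Fin I} {cg : Ω → Fin J} (hcf : Measurable[A] cf) (hcg : Measurable[B] cg) :
    2⁻¹ * ∑ i, ∑ j,
        |P.real (cf ⁻¹' {i} ∩ cg ⁻¹' {j}) - P.real (cf ⁻¹' {i}) * P.real (cg ⁻¹' {j})|
      ≤ betaDep P A B := by
  have hcover {K : ℕ} (c : Ω → Fin K) : ⋃ k, c ⁻¹' {k} = Set.univ := by
    rw [← Set.preimage_iUnion, Set.iUnion_of_singleton, Set.preimage_univ]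
  refine le_csSup ⟨1, ?_⟩ ⟨I, J, _, _, fun i => hcf (measurableSet_singleton i),
    fun j => hcg (measurableSet_singleton j), pairwise_disjoint_fiber cf, hcover cf,
    pairwise_disjoint_fiber cg, hcover cg, rfl⟩
  rintro r ⟨I, J, As, Bs, hAs, hBs, hdA, hcA, hdB, hcB, rfl⟩
  exact half_sum_abs_measureReal_sub_le_one (fun i => hA _ (hAs i)) (fun j => hB _ (hBs j))
    hdA hcA hdB hcB

end BetaDep

lemma abs_mul_sub_mul_le {a b a' b' C δ : ℝ} (ha : |a| ≤ C) (hb' : |b'| ≤ C)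
    (haa' : |a - a'| ≤ δ) (hbb' : |b - b'| ≤ δ) : |a * b - a' * b'| ≤ 2 * C * δ :=
  calc |a * b - a' * b'| = |a * (b - b') + (a - a') * b'| := by congr 1; ring
    _ ≤ |a| * |b - b'| + |a - a'| * |b'| := by
        rw [← abs_mul, ← abs_mul]; exact abs_add_le _ _
    _ ≤ C * δ + δ * C := by
        gcongr
        · exact (abs_nonneg _).trans ha
        · exact (abs_nonneg _).trans haa'
    _ = 2 * C * δ := by ring

section Integrals

variable {Ω : Type*} [MeasurableSpace Ω] {P : Measure Ω}

lemma integral_comp_eq_sum [IsFiniteMeasure P] {ι : Type*} [Fintype ι] [MeasurableSpace ι]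
    [MeasurableSingletonClass ι] {c : Ω → ι} (hc : Measurable c) (a : ι → ℝ) :
    ∫ ω, a (c ω) ∂P = ∑ i, P.real (c ⁻¹' {i}) * a i := by
  rw [← integral_map hc.aemeasurable (Integrable.of_finite).aestronglyMeasurable,
    integral_fintype Integrable.of_finite]
  simp [map_measureReal_apply hc (measurableSet_singleton _)]

variable [IsProbabilityMeasure P]

lemma abs_integral_le_of_ae_abs_le {f : Ω → ℝ} {C : ℝ} (h : ∀ᵐ ω ∂P, |f ω| ≤ C) :
    |∫ ω, f ω ∂P| ≤ C := by
  simpa using norm_integral_le_of_norm_le_const (μ := P) (f := f) h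

lemma abs_integral_sub_integral_le {f g : Ω → ℝ} (hf : Integrable f P) (hg : Integrable g P)
    {δ : ℝ} (h : ∀ᵐ ω ∂P, |f ω - g ω| ≤ δ) : |∫ ω, f ω ∂P - ∫ ω, g ω ∂P| ≤ δ := by
  rw [← integral_sub hf hg]
  exact abs_integral_le_of_ae_abs_le h


lemma abs_cov_sub_cov_le {f g f' g' : Ω → ℝ} {C δ : ℝ}
    (hf : AEStronglyMeasurable f P) (hg : AEStronglyMeasurable g P)
    (hf' : AEStronglyMeasurable f' P) (hg' : AEStronglyMeasurable g' P)
    (hfC : ∀ᵐ ω ∂P, |f ω| ≤ C) (hgC : ∀ᵐ ω ∂P, |g ω| ≤ C)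
    (hf'C : ∀ᵐ ω ∂P, |f' ω| ≤ C) (hg'C : ∀ᵐ ω ∂P, |g' ω| ≤ C)
    (hff' : ∀ᵐ ω ∂P, |f ω - f' ω| ≤ δ) (hgg' : ∀ᵐ ω ∂P, |g ω - g' ω| ≤ δ) :
    |(∫ ω, f ω * g ω ∂P - (∫ ω, f ω ∂P) * ∫ ω, g ω ∂P)
      - (∫ ω, f' ω * g' ω ∂P - (∫ ω, f' ω ∂P) * ∫ ω, g' ω ∂P)| ≤ 4 * C * δ := by
  have hint {h : Ω → ℝ} (hh : AEStronglyMeasurable h P) (hhC : ∀ᵐ ω ∂P, |h ω| ≤ C) :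
      Integrable h P :=
    Integrable.of_bound hh C (by simpa using hhC)
  have hprod : |∫ ω, f ω * g ω ∂P - ∫ ω, f' ω * g' ω ∂P| ≤ 2 * C * δ := by
    refine abs_integral_sub_integral_le ((hint hg hgC).bdd_mul hf (by simpa using hfC))
      ((hint hg' hg'C).bdd_mul hf' (by simpa using hf'C)) ?_
    filter_upwards [hfC, hg'C, hff', hgg'] with ω h₁ h₂ h₃ h₄
    exact abs_mul_sub_mul_le h₁ h₂ h₃ h₄
  have hmul : |(∫ ω, f ω ∂P) * (∫ ω, g ω ∂P) - (∫ ω, f' ω ∂P) * ∫ ω, g' ω ∂P| ≤ 2 * C * δ :=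
    abs_mul_sub_mul_le (abs_integral_le_of_ae_abs_le hfC) (abs_integral_le_of_ae_abs_le hg'C)
      (abs_integral_sub_integral_le (hint hf hfC) (hint hf' hf'C) hff')
      (abs_integral_sub_integral_le (hint hg hgC) (hint hg' hg'C) hgg')
  calc _ = |(∫ ω, f ω * g ω ∂P - ∫ ω, f' ω * g' ω ∂P)
          - ((∫ ω, f ω ∂P) * (∫ ω, g ω ∂P) - (∫ ω, f' ω ∂P) * ∫ ω, g' ω ∂P)| := by congr 1; ring
    _ ≤ _ := abs_sub _ _
    _ ≤ 4 * C * δ := by linarith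

end Integrals

section Grid

def gridPoint (C : ℝ) (m : ℕ) (i : Fin (m + 1)) : ℝ := C * (2 * ((i : ℝ) / m) - 1)

/-- For `x ∈ [-C, C]`, the index of the largest grid point `≤ x`. -/
def gridIndex (C : ℝ) (m : ℕ) (x : ℝ) : Fin (m + 1) :=
  Fin.clamp ⌊(x / C + 1) * m / 2⌋₊ m

variable {C : ℝ} {m : ℕ}

lemma abs_gridPoint_le (hC : 0 ≤ C) (i : Fin (m + 1)) : |gridPoint C m i| ≤ C := by
  have h0 : 0 ≤ (i : ℝ) / m := by positivity
  have h1 : (i : ℝ) / m ≤ 1 := div_le_one_of_le₀ (by exact_mod_cast i.is_le) (by positivity)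
  rw [gridPoint, abs_mul, abs_of_nonneg hC]
  exact mul_le_of_le_one_right hC (abs_le.2 ⟨by linarith, by linarith⟩)

lemma measurable_gridIndex : Measurable (gridIndex C m) := by
  have : Measurable fun x : ℝ => ⌊(x / C + 1) * m / 2⌋₊ := Nat.measurable_floor.comp (by fun_prop)
  exact (measurable_from_nat (f := (Fin.clamp · m))).comp this

lemma abs_sub_gridPoint_gridIndex_le (hC : 0 ≤ C) (hm : 0 < m) {x : ℝ} (hx : |x| ≤ C) :
    |x - gridPoint C m (gridIndex C m x)| ≤ 2 * C / m := by
  rcases hC.eq_or_lt with rfl | hC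
  · simp [abs_nonpos_iff.1 hx, gridPoint]
  have hm' : (0 : ℝ) < m := by exact_mod_cast hm
  have hxC : -1 ≤ x / C ∧ x / C ≤ 1 := by
    rw [le_div_iff₀ hC, div_le_one hC]; constructor <;> linarith [abs_le.1 hx]
  set t := (x / C + 1) * m / 2 with ht
  have ht0 : 0 ≤ t := div_nonneg (mul_nonneg (by linarith) hm'.le) zero_le_two
  have htm : t ≤ m := by rw [ht, div_le_iff₀ zero_lt_two]; nlinarith
  have hk : ⌊t⌋₊ ≤ m := Nat.floor_le_of_le htm
  have hidx : ((gridIndex C m x : ℕ) : ℝ) = ⌊t⌋₊ := by simp [gridIndex, Fin.clamp, ← ht, hk]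
  have hdiff : x - gridPoint C m (gridIndex C m x) = 2 * C / m * (t - ⌊t⌋₊) := by
    rw [gridPoint, hidx, ht]; field_simp; ring
  have hfrac : 0 ≤ t - ⌊t⌋₊ ∧ t - ⌊t⌋₊ ≤ 1 :=
    ⟨sub_nonneg.2 (Nat.floor_le ht0), by linarith [Nat.lt_floor_add_one t]⟩
  rw [hdiff, abs_of_nonneg (mul_nonneg (by positivity) hfrac.1)]
  exact mul_le_of_le_one_right (by positivity) hfrac.2

end Grid

section Covariance

variable {Ω : Type*} {A B : MeasurableSpace Ω} [mΩ : MeasurableSpace Ω] {P : Measure Ω}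
  [IsProbabilityMeasure P]

lemma integral_mul_sub_mul_integral_eq_sum {I J : ℕ} {cf : Ω → Fin I} {cg : Ω → Fin J}
    (hcf : Measurable cf) (hcg : Measurable cg) (a : Fin I → ℝ) (b : Fin J → ℝ) :
    ∫ ω, a (cf ω) * b (cg ω) ∂P - (∫ ω, a (cf ω) ∂P) * ∫ ω, b (cg ω) ∂P =
      ∑ i, ∑ j, a i * b j *
        (P.real (cf ⁻¹' {i} ∩ cg ⁻¹' {j}) - P.real (cf ⁻¹' {i}) * P.real (cg ⁻¹' {j})) := by
  have hpreimage (i : Fin I) (j : Fin J) :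
      (fun ω => (cf ω, cg ω)) ⁻¹' {(i, j)} = cf ⁻¹' {i} ∩ cg ⁻¹' {j} := by
    ext ω; simp [Prod.ext_iff]
  rw [integral_comp_eq_sum (hcf.prodMk hcg) (fun p => a p.1 * b p.2), Fintype.sum_prod_type,
    integral_comp_eq_sum hcf, integral_comp_eq_sum hcg, sum_mul_sum, ← sum_sub_distrib]
  refine sum_congr rfl fun i _ => ?_
  rw [← sum_sub_distrib]
  exact sum_congr rfl fun j _ => by rw [hpreimage]; ring

lemma abs_integral_mul_sub_le_betaDep_of_fin (hA : A ≤ mΩ) (hB : B ≤ mΩ) {I J : ℕ}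
    {cf : Ω → Fin I} {cg : Ω → Fin J} (hcf : Measurable[A] cf) (hcg : Measurable[B] cg)
    {a : Fin I → ℝ} {b : Fin J → ℝ} {C : ℝ} (ha : ∀ i, |a i| ≤ C) (hb : ∀ j, |b j| ≤ C) :
    |∫ ω, a (cf ω) * b (cg ω) ∂P - (∫ ω, a (cf ω) ∂P) * ∫ ω, b (cg ω) ∂P|
      ≤ 2 * C ^ 2 * betaDep P A B := by
  rw [integral_mul_sub_mul_integral_eq_sum (hcf.mono hA le_rfl) (hcg.mono hB le_rfl)]
  calc _ ≤ ∑ i, ∑ j, |a i * b j *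
          (P.real (cf ⁻¹' {i} ∩ cg ⁻¹' {j}) - P.real (cf ⁻¹' {i}) * P.real (cg ⁻¹' {j}))| :=
        (abs_sum_le_sum_abs _ _).trans (sum_le_sum fun i _ => abs_sum_le_sum_abs _ _)
    _ ≤ ∑ i, ∑ j, C ^ 2 *
          |P.real (cf ⁻¹' {i} ∩ cg ⁻¹' {j}) - P.real (cf ⁻¹' {i}) * P.real (cg ⁻¹' {j})| := by
        gcongr with i _ j _
        rw [abs_mul, abs_mul, sq]
        gcongr
        exacts [(abs_nonneg _).trans (ha i), ha i, hb j]
    _ = 2 * C ^ 2 * (2⁻¹ * ∑ i, ∑ j,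
          |P.real (cf ⁻¹' {i} ∩ cg ⁻¹' {j}) - P.real (cf ⁻¹' {i}) * P.real (cg ⁻¹' {j})|) := by
        simp_rw [← mul_sum]; ring
    _ ≤ 2 * C ^ 2 * betaDep P A B := by
        gcongr
        exact le_betaDep hA hB hcf hcg

lemma abs_integral_mul_sub_le_betaDep_add (hA : A ≤ mΩ) (hB : B ≤ mΩ) {f g : Ω → ℝ}
    (hf : Measurable[A] f) (hg : Measurable[B] g) {C : ℝ} (hC : 0 ≤ C)
    (hfC : ∀ᵐ ω ∂P, |f ω| ≤ C) (hgC : ∀ᵐ ω ∂P, |g ω| ≤ C) {m : ℕ} (hm : 0 < m) :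
    |∫ ω, f ω * g ω ∂P - (∫ ω, f ω ∂P) * ∫ ω, g ω ∂P|
      ≤ 2 * C ^ 2 * betaDep P A B + 4 * C * (2 * C / m) := by
  have hmeas {h : Ω → ℝ} (hh : Measurable h) :
      AEStronglyMeasurable (fun ω => gridPoint C m (gridIndex C m (h ω))) P :=
    ((measurable_of_finite (gridPoint C m)).comp
      (measurable_gridIndex.comp hh)).aestronglyMeasurable
  have hgrid (h : Ω → ℝ) : ∀ᵐ ω ∂P, |gridPoint C m (gridIndex C m (h ω))| ≤ C :=
    .of_forall fun ω => abs_gridPoint_le hC _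
  have hsimple := abs_integral_mul_sub_le_betaDep_of_fin (P := P) hA hB
    ((measurable_gridIndex (C := C) (m := m)).comp hf)
    ((measurable_gridIndex (C := C) (m := m)).comp hg)
    (abs_gridPoint_le hC) (abs_gridPoint_le hC)
  have hpert := abs_cov_sub_cov_le (hf.mono hA le_rfl).aestronglyMeasurable
    (hg.mono hB le_rfl).aestronglyMeasurable (hmeas (hf.mono hA le_rfl))
    (hmeas (hg.mono hB le_rfl)) hfC hgC (hgrid f) (hgrid g)
    (hfC.mono fun ω => abs_sub_gridPoint_gridIndex_le hC hm)
    (hgC.mono fun ω => abs_sub_gridPoint_gridIndex_le hC hm)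
  simp only [Function.comp_apply] at hsimple
  linarith [(abs_sub_abs_le_abs_sub _ _).trans hpert]

theorem abs_integral_mul_sub_le_betaDep (hA : A ≤ mΩ) (hB : B ≤ mΩ) {f g : Ω → ℝ}
    (hf : Measurable[A] f) (hg : Measurable[B] g) {C : ℝ}
    (hfC : ∀ᵐ ω ∂P, |f ω| ≤ C) (hgC : ∀ᵐ ω ∂P, |g ω| ≤ C) :
    |∫ ω, f ω * g ω ∂P - (∫ ω, f ω ∂P) * ∫ ω, g ω ∂P| ≤ 2 * C ^ 2 * betaDep P A B := by
  have hC : 0 ≤ C := let ⟨ω, hω⟩ := hfC.exists; (abs_nonneg _).trans hω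
  refine ge_of_tendsto ?_ ((Filter.eventually_gt_atTop 0).mono fun m hm =>
    abs_integral_mul_sub_le_betaDep_add hA hB hf hg hC hfC hgC hm)
  simpa using tendsto_const_nhds.add
    ((tendsto_const_div_atTop_nhds_zero_nat (2 * C)).const_mul (4 * C))

end Covariance

section Mixing

variable {Ω E : Type*} [MeasurableSpace E] {X : ℤ → Ω → E}

abbrev pastSigma (X : ℤ → Ω → E) (t : ℤ) : MeasurableSpace Ω :=
  ⨆ s : {s : ℤ // s ≤ t}, MeasurableSpace.comap (X s) inferInstance

abbrev futureSigma (X : ℤ → Ω → E) (t : ℤ) (q : ℕ) : MeasurableSpace Ω :=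
  ⨆ s : {s : ℤ // t + q ≤ s}, MeasurableSpace.comap (X s) inferInstance

lemma measurable_pastSigma {s t : ℤ} (h : s ≤ t) : Measurable[pastSigma X t] (X s) :=
  Measurable.of_comap_le (le_iSup (fun s : {s : ℤ // s ≤ t} =>
    MeasurableSpace.comap (X s) inferInstance) ⟨s, h⟩)

lemma measurable_futureSigma {s t : ℤ} {q : ℕ} (h : t + q ≤ s) :
    Measurable[futureSigma X t q] (X s) :=
  Measurable.of_comap_le (le_iSup (fun s : {s : ℤ // t + q ≤ s} =>
    MeasurableSpace.comap (X s) inferInstance) ⟨s, h⟩)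

variable [mΩ : MeasurableSpace Ω]

lemma pastSigma_le (hX : ∀ t, Measurable (X t)) (t : ℤ) : pastSigma X t ≤ mΩ :=
  iSup_le fun s => (hX s).comap_le

lemma futureSigma_le (hX : ∀ t, Measurable (X t)) (t : ℤ) (q : ℕ) : futureSigma X t q ≤ mΩ :=
  iSup_le fun s => (hX s).comap_le

variable {P : Measure Ω}

lemma betaMixZ_eq_iSup (q : ℕ) :
    betaMixZ P X q = ⨆ t, betaDep P (pastSigma X t) (futureSigma X t q) := rfl

lemma betaMixZ_nonneg (q : ℕ) : 0 ≤ betaMixZ P X q :=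
  Real.iSup_nonneg fun _ => betaDep_nonneg

variable [IsProbabilityMeasure P]

lemma betaMixZ_le_one (hX : ∀ t, Measurable (X t)) (q : ℕ) : betaMixZ P X q ≤ 1 :=
  ciSup_le fun t => betaDep_le_one (pastSigma_le hX t) (futureSigma_le hX t q)

lemma betaDep_le_betaMixZ (hX : ∀ t, Measurable (X t)) (t : ℤ) (q : ℕ) :
    betaDep P (pastSigma X t) (futureSigma X t q) ≤ betaMixZ P X q := by
  rw [betaMixZ_eq_iSup]
  exact le_ciSup ⟨1, Set.forall_mem_range.2 fun t =>
    betaDep_le_one (pastSigma_le hX t) (futureSigma_le hX t q)⟩ t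

end Mixing

section RealMixing

variable {Ω : Type*} [MeasurableSpace Ω] {P : Measure Ω} [IsProbabilityMeasure P]
  {X : ℤ → Ω → ℝ} {M : ℝ}

lemma abs_integral_mul_sub_le_betaMixZ (hX : ∀ t, Measurable (X t))
    (hbdd : ∀ t, ∀ᵐ ω ∂P, |X t ω| ≤ M) {s t : ℤ} {q : ℕ} (h : s + q ≤ t) :
    |∫ ω, X s ω * X t ω ∂P - (∫ ω, X s ω ∂P) * ∫ ω, X t ω ∂P| ≤ 2 * M ^ 2 * betaMixZ P X q :=
  (abs_integral_mul_sub_le_betaDep (pastSigma_le hX s) (futureSigma_le hX s q)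
    (measurable_pastSigma le_rfl) (measurable_futureSigma h) (hbdd s) (hbdd t)).trans
    (by gcongr; exact betaDep_le_betaMixZ hX s q)

lemma abs_integral_mul_le_betaMixZ_dist (hX : ∀ t, Measurable (X t))
    (hcentered : ∀ t, ∫ ω, X t ω ∂P = 0) (hbdd : ∀ t, ∀ᵐ ω ∂P, |X t ω| ≤ M) (j k : ℕ) :
    |∫ ω, X j ω * X k ω ∂P| ≤ 2 * M ^ 2 * betaMixZ P X (Nat.dist j k) := by
  wlog hjk : j ≤ k generalizing j k
  · simpa [mul_comm, Nat.dist_comm] using this k j (by omega)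
  have hq : (j : ℤ) + (Nat.dist j k : ℕ) ≤ k := by rw [Nat.dist_eq_sub_of_le hjk]; omega
  simpa [hcentered] using abs_integral_mul_sub_le_betaMixZ hX hbdd hq

end RealMixing

lemma sum_comp_le_sum_of_injOn {ι κ : Type*} {s : Finset ι} {t : Finset κ} {f : κ → ℝ}
    {e : ι → κ} (he : Set.InjOn e s) (hst : Set.MapsTo e s t) (hf : ∀ x ∈ t, 0 ≤ f x) :
    ∑ i ∈ s, f (e i) ≤ ∑ x ∈ t, f x := by
  classical
  rw [← sum_image he]
  exact sum_le_sum_of_subset_of_nonneg (image_subset_iff.2 hst)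
    fun x hx _ => hf x hx

lemma sum_Icc_dist_le {f : ℕ → ℝ} (hf : ∀ d, 0 ≤ f d) {n j : ℕ} (hj : j ∈ Icc 1 n) :
    ∑ k ∈ Icc 1 n, f (Nat.dist j k) ≤ 2 * ∑ d ∈ range n, f d := by
  rw [mem_Icc] at hj
  have hmaps (p : ℕ → Prop) [DecidablePred p] :
      Set.MapsTo (Nat.dist j) ((Icc 1 n).filter p) (range n) := by
    intro k hk
    simp only [mem_coe, mem_filter, mem_Icc, mem_range] at hk ⊢
    simp only [Nat.dist]; omega
  have hinj_le : Set.InjOn (Nat.dist j) ((Icc 1 n).filter (· ≤ j)) := by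
    intro a ha b hb hab
    simp only [mem_coe, mem_filter, mem_Icc, Nat.dist] at ha hb hab; omega
  have hinj_gt : Set.InjOn (Nat.dist j) ((Icc 1 n).filter (¬ · ≤ j)) := by
    intro a ha b hb hab
    simp only [mem_coe, mem_filter, mem_Icc, Nat.dist] at ha hb hab; omega
  rw [← sum_filter_add_sum_filter_not _ (· ≤ j), two_mul]
  exact add_le_add (sum_comp_le_sum_of_injOn hinj_le (hmaps _) fun d _ => hf d)
    (sum_comp_le_sum_of_injOn hinj_gt (hmaps _) fun d _ => hf d)

lemma sum_Icc_sum_Icc_dist_le {f : ℕ → ℝ} (hf : ∀ d, 0 ≤ f d) (n : ℕ) :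
    ∑ j ∈ Icc 1 n, ∑ k ∈ Icc 1 n, f (Nat.dist j k) ≤ 2 * n * ∑ d ∈ range n, f d :=
  calc _ ≤ ∑ j ∈ Icc 1 n, 2 * ∑ d ∈ range n, f d := sum_le_sum fun j hj => sum_Icc_dist_le hf hj
    _ = 2 * n * ∑ d ∈ range n, f d := by
        rw [sum_const, Nat.card_Icc, Nat.add_sub_cancel, nsmul_eq_mul]; ring

section Variance

variable {Ω : Type*} [MeasurableSpace Ω] {P : Measure Ω}

lemma integral_sq_sum_eq {ι : Type*} (s : Finset ι) {Y : ι → Ω → ℝ}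
    (hY : ∀ i j, Integrable (fun ω => Y i ω * Y j ω) P) :
    ∫ ω, (∑ i ∈ s, Y i ω) ^ 2 ∂P = ∑ i ∈ s, ∑ j ∈ s, ∫ ω, Y i ω * Y j ω ∂P := by
  simp_rw [sq, sum_mul_sum]
  rw [integral_finsetSum _ fun i _ => integrable_finsetSum _ fun j _ => hY i j]
  exact sum_congr rfl fun i _ => integral_finsetSum _ fun j _ => hY i j

lemma one_div_mul_integral_sq_sum_Icc_le {Y : ℕ → Ω → ℝ} {f : ℕ → ℝ}
    (hY : ∀ i j, Integrable (fun ω => Y i ω * Y j ω) P) (hf : ∀ d, 0 ≤ f d)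
    (hcov : ∀ j k, |∫ ω, Y j ω * Y k ω ∂P| ≤ f (Nat.dist j k)) (n : ℕ) :
    1 / (n : ℝ) * ∫ ω, (∑ j ∈ Icc 1 n, Y j ω) ^ 2 ∂P ≤ 2 * ∑ d ∈ range n, f d := by
  rcases n.eq_zero_or_pos with rfl | hn
  · simp
  have hsum : ∫ ω, (∑ j ∈ Icc 1 n, Y j ω) ^ 2 ∂P ≤ 2 * n * ∑ d ∈ range n, f d := by
    rw [integral_sq_sum_eq _ hY]
    exact (sum_le_sum fun j _ => sum_le_sum fun k _ => (le_abs_self _).trans (hcov j k)).trans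
      (sum_Icc_sum_Icc_dist_le hf n)
  calc _ ≤ 1 / (n : ℝ) * (2 * n * ∑ d ∈ range n, f d) := by gcongr
    _ = 2 * ∑ d ∈ range n, f d := by field_simp

end Variance

lemma lintegral_Ioc_ite_lt {b : ℝ} (hb : b ≤ 1) :
    ∫⁻ u in Set.Ioc (0 : ℝ) 1, (if u < b then (1 : ℝ≥0∞) else 0) = ENNReal.ofReal b := by
  have hset : Set.Iio b ∩ Set.Ioc 0 1 = Set.Ioo 0 b := by
    ext u; simp only [Set.mem_inter_iff, Set.mem_Iio, Set.mem_Ioc, Set.mem_Ioo]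
    constructor
    · rintro ⟨h₁, h₂, -⟩; exact ⟨h₂, h₁⟩
    · rintro ⟨h₁, h₂⟩; exact ⟨h₂, h₁, by linarith⟩
  have hind : (fun u : ℝ => if u < b then (1 : ℝ≥0∞) else 0) = (Set.Iio b).indicator 1 := by
    ext u; simp [Set.indicator]
  rw [hind, lintegral_indicator_one measurableSet_Iio, Measure.restrict_apply measurableSet_Iio,
    hset, Real.volume_Ioo, sub_zero]

lemma ofReal_sum_le_lintegral_tsum {β : ℕ → ℝ} (hβ₀ : ∀ k, 0 ≤ β k) (hβ₁ : ∀ k, β k ≤ 1)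
    (n : ℕ) : ENNReal.ofReal (∑ k ∈ range n, β k) ≤
      ∫⁻ u in Set.Ioc (0 : ℝ) 1, ∑' k, (if u < β k then (1 : ℝ≥0∞) else 0) := by
  rw [ENNReal.ofReal_sum_of_nonneg fun k _ => hβ₀ k]
  simp_rw [← lintegral_Ioc_ite_lt (hβ₁ _)]
  rw [← lintegral_finsetSum _ fun k _ => measurable_const.ite measurableSet_Iio measurable_const]
  exact lintegral_mono fun u => ENNReal.sum_le_tsum _

theorem stmt2_general (Ω : Type) [MeasurableSpace Ω] (P : Measure Ω) [IsProbabilityMeasure P]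
    (X : ℤ → Ω → ℝ) (hXmeas : ∀ t, Measurable (X t)) (M : ℝ)
    (hcentered : ∀ t : ℤ, ∫ ω, X t ω ∂P = 0)
    (hbdd : ∀ t : ℤ, ∀ᵐ ω ∂P, |X t ω| ≤ M)
    (beta : ℕ → ℝ)
    (hbeta : ∀ k : ℕ, beta k = if k = 0 then 1 else betaMixZ P X k)
    (n : ℕ) :
    ENNReal.ofReal ((1 / (n : ℝ)) * ∫ ω, (∑ j ∈ Finset.Icc 1 n, X (j : ℤ) ω) ^ 2 ∂P) ≤
      ENNReal.ofReal (4 * M ^ 2) *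
        ∫⁻ u in Set.Ioc (0 : ℝ) 1, ∑' k : ℕ, (if u < beta k then (1 : ℝ≥0∞) else 0) := by
  have hmix_le (k : ℕ) : betaMixZ P X k ≤ beta k := by
    rw [hbeta]; split_ifs
    exacts [betaMixZ_le_one hXmeas k, le_rfl]
  have hbeta₀ (k : ℕ) : 0 ≤ beta k := (betaMixZ_nonneg k).trans (hmix_le k)
  have hbeta₁ (k : ℕ) : beta k ≤ 1 := by
    rw [hbeta]; split_ifs
    exacts [le_rfl, betaMixZ_le_one hXmeas k]
  have hint (i j : ℤ) : Integrable (fun ω => X i ω * X j ω) P :=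
    (Integrable.of_bound (hXmeas j).aestronglyMeasurable M (by simpa using hbdd j)).bdd_mul
      (hXmeas i).aestronglyMeasurable (by simpa using hbdd i)
  have hvar := one_div_mul_integral_sq_sum_Icc_le (fun i j => hint i j)
    (fun d => mul_nonneg (by positivity) (hbeta₀ d))
    (fun j k => (abs_integral_mul_le_betaMixZ_dist hXmeas hcentered hbdd j k).trans
      (mul_le_mul_of_nonneg_left (hmix_le _) (by positivity))) n
  rw [← mul_sum, ← mul_assoc] at hvar
  calc _ ≤ ENNReal.ofReal (4 * M ^ 2 * ∑ k ∈ range n, beta k) :=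
        ENNReal.ofReal_le_ofReal (by linarith)
    _ = ENNReal.ofReal (4 * M ^ 2) * ENNReal.ofReal (∑ k ∈ range n, beta k) :=
        ENNReal.ofReal_mul (by positivity)
    _ ≤ _ := by gcongr; exact ofReal_sum_le_lintegral_tsum hbeta₀ hbeta₁ n

/-- Rio's covariance/variance bound: for a centered stationary β-mixing
sequence with |X_t| ≤ M a.s., (1/n) E(Σ_{j=1}^n X_j)² ≤ 4M² ∫_0^1 β^{-1}(u)du,
where β^{-1}(u) = Σ_{k∈ℕ} 1_{β(k) > u} with the convention β(0)=1. -/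
theorem stmt2 (Ω : Type) [MeasurableSpace Ω] (P : Measure Ω) [IsProbabilityMeasure P]
    (X : ℤ → Ω → ℝ) (hXmeas : ∀ t, Measurable (X t)) (M : ℝ)
    (hstat : StationaryZ P X)
    (hcentered : ∀ t : ℤ, ∫ ω, X t ω ∂P = 0)
    (hbdd : ∀ t : ℤ, ∀ᵐ ω ∂P, |X t ω| ≤ M)
    (beta : ℕ → ℝ)
    (hbeta : ∀ k : ℕ, beta k = if k = 0 then 1 else betaMixZ P X k)
    (n : ℕ) (hn : 0 < n) :
    ENNReal.ofReal ((1 / (n : ℝ)) * ∫ ω, (∑ j ∈ Finset.Icc 1 n, X (j : ℤ) ω) ^ 2 ∂P) ≤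
      ENNReal.ofReal (4 * M ^ 2) *
        ∫⁻ u in Set.Ioc (0 : ℝ) 1, ∑' k : ℕ, (if u < beta k then (1 : ℝ≥0∞) else 0) :=
  stmt2_general Ω P X hXmeas M hcentered hbdd beta hbeta n
end
end

section
/- Let q, m ∈ ℕ* and let Y_1, …, Y_m be i.i.d. random vectors with values in ℝ^q. For t ∈ ℝ and y = (z_1, …, z_q) ∈ ℝ^q set f_t(y) = (1/q) Σ_{i=1}^q 1_{z_i > t}, and define F(t) = E[f_t(Y_1)] and F_m(t) = (1/m) Σ_{j=1}^m f_t(Y_j). Then for every x > 0 with m x² ≥ 1, P( sup_{t ∈ ℝ} (F(t) − F_m(t))/√(F(t)) ≥ 2x ) ≤ 2 (2 q m) e^{−m x²}, with the convention that the supremand is 0 when F(t) = 0. -/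
/-!
Cut the range of `F` into the bands `w_{k+1}² < F ≤ w_k²` of the grid `w_k = max (1 - k x / 10) x`,
at most `4 m` of them because `m x² ≥ 1`; below level `x²` the normalized deviation is at most
`√F ≤ x`. By right continuity of `F`, all `t` in a band lie strictly below the last point `u` where
`F` is above the band, so there `F_m t` dominates the empirical fraction of coordinates in
`[u, ∞)`, an average of `m` independent `[0, 1]` variables whose mean `F (u-)` lies in the band.
A single Bernstein bound for this average, with variance proxy `w_k²`, costs `exp (-m x²)` per
band, and a union bound over the bands finishes.
-/

open MeasureTheory ProbabilityTheory Filter Set Real Topology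

lemma Real.exp_neg_le_one_sub_add_sq_div_two {u : ℝ} (hu : 0 ≤ u) :
    exp (-u) ≤ 1 - u + u ^ 2 / 2 := by
  have hderiv (z : ℝ) :
      HasDerivAt (fun z => exp z * (1 - z + z ^ 2 / 2)) (exp z * (z ^ 2 / 2)) z := by
    refine ((hasDerivAt_exp z).mul
      (((hasDerivAt_id z).const_sub 1).add ((hasDerivAt_pow 2 z).div_const 2))).congr_deriv ?_
    norm_num
    ring
  have hmono : Monotone fun z => exp z * (1 - z + z ^ 2 / 2) :=
    monotone_of_deriv_nonneg (fun z => (hderiv z).differentiableAt)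
      fun z => (hderiv z).deriv ▸ by positivity
  have h := hmono hu
  norm_num at h
  rwa [exp_neg, inv_le_iff_one_le_mul₀ (exp_pos u), mul_comm]

section Chernoff

variable {Ω : Type*} [MeasurableSpace Ω] {P : Measure Ω} [IsProbabilityMeasure P]

lemma mgf_neg_le {W : Ω → ℝ} (hW : Measurable W) (h01 : ∀ ω, W ω ∈ Icc (0 : ℝ) 1)
    {t : ℝ} (ht : 0 ≤ t) :
    mgf (fun ω => -W ω) P t ≤ exp ((t ^ 2 / 2 - t) * P[W]) := by
  have hWint : Integrable W P :=
    .of_bound hW.aestronglyMeasurable 1 (ae_of_all _ fun ω => by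
      rw [Real.norm_eq_abs, abs_le]; constructor <;> linarith [(h01 ω).1, (h01 ω).2])
  -- `W² ≤ W` turns the quadratic Taylor bound for `exp (-t W)` into an affine one.
  have hpoint (ω : Ω) : exp (t * -W ω) ≤ 1 + (t ^ 2 / 2 - t) * W ω := by
    obtain ⟨h0, h1⟩ := h01 ω
    calc exp (t * -W ω) ≤ 1 - t * W ω + (t * W ω) ^ 2 / 2 := by
          rw [mul_neg]; exact exp_neg_le_one_sub_add_sq_div_two (by positivity)
      _ ≤ 1 + (t ^ 2 / 2 - t) * W ω := by nlinarith [mul_le_mul_of_nonneg_left h1 (sq_nonneg t)]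
  calc mgf (fun ω => -W ω) P t
      ≤ ∫ ω, 1 + (t ^ 2 / 2 - t) * W ω ∂P :=
        integral_mono_of_nonneg (ae_of_all _ fun _ => (exp_pos _).le)
          ((integrable_const 1).add (hWint.const_mul _)) (ae_of_all _ hpoint)
    _ = 1 + (t ^ 2 / 2 - t) * P[W] := by
        rw [integral_add (integrable_const 1) (hWint.const_mul _), integral_const_mul]
        simp
    _ ≤ exp ((t ^ 2 / 2 - t) * P[W]) := by linarith [add_one_le_exp ((t ^ 2 / 2 - t) * P[W])]

theorem measureReal_sum_integral_sub_ge_le {ι : Type*} [Fintype ι] {W : ι → Ω → ℝ}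
    (hW : ∀ j, Measurable (W j)) (hindep : iIndepFun W P)
    (h01 : ∀ j ω, W j ω ∈ Icc (0 : ℝ) 1) {s B : ℝ} (hs : 0 ≤ s) (hB : 0 < B)
    (hsum : ∑ j, P[W j] ≤ B) :
    P.real {ω | s ≤ ∑ j, (P[W j] - W j ω)} ≤ exp (-s ^ 2 / (2 * B)) := by
  set t := s / B
  set X : ι → Ω → ℝ := fun j ω => -W j ω
  have hX : ∀ j, Measurable (X j) := fun j => (hW j).neg
  have hXindep : iIndepFun X P := hindep.comp (fun _ w => -w) fun _ => measurable_neg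
  have hevent : {ω | s ≤ ∑ j, (P[W j] - W j ω)} = {ω | s - (∑ j, P[W j]) ≤ (∑ j, X j) ω} := by
    ext ω; simp only [mem_ofPred_eq, Finset.sum_apply, Finset.sum_sub_distrib, X,
      Finset.sum_neg_distrib]; constructor <;> intro h <;> linarith
  have hint : Integrable (fun ω => exp (t * (∑ j, X j) ω)) P :=
    hXindep.integrable_exp_mul_sum hX fun j _ =>
      .of_bound (by fun_prop) 1 (ae_of_all _ fun ω => by
        simp only [norm_eq_abs, abs_exp, exp_le_one_iff, X]
        nlinarith [(h01 j ω).1, show 0 ≤ t by positivity])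
  calc P.real {ω | s ≤ ∑ j, (P[W j] - W j ω)}
      ≤ exp (-t * (s - (∑ j, P[W j]))) * mgf (∑ j, X j) P t := by
        rw [hevent]; exact measure_ge_le_exp_mul_mgf _ (by positivity) hint
    _ = exp (-t * (s - (∑ j, P[W j]))) * ∏ j, mgf (X j) P t := by rw [hXindep.mgf_sum hX]
    _ ≤ exp (-t * (s - (∑ j, P[W j]))) * ∏ j, exp ((t ^ 2 / 2 - t) * P[W j]) := by
        gcongr with j
        · exact fun j _ => mgf_nonneg
        · exact mgf_neg_le (hW j) (h01 j) (by positivity)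
    _ = exp (-t * s + t ^ 2 * (∑ j, P[W j]) / 2) := by
        rw [← exp_sum, ← exp_add, ← Finset.mul_sum]; ring_nf
    _ ≤ exp (-t * s + t ^ 2 * B / 2) := by gcongr
    _ = exp (-s ^ 2 / (2 * B)) := by congr 1; simp only [t]; field_simp; ring

end Chernoff

section CoordFrac

variable {ι : Type*} [Fintype ι]

-- `coordFrac (Ioi t) y` is the `f_t(y)` of the statement.
noncomputable def coordFrac (S : Set ℝ) (y : ι → ℝ) : ℝ :=
  (1 / (Fintype.card ι : ℝ)) * ∑ i, S.indicator (1 : ℝ → ℝ) (y i)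

lemma coordFrac_nonneg (S : Set ℝ) (y : ι → ℝ) : 0 ≤ coordFrac S y := by
  unfold coordFrac
  exact mul_nonneg (by positivity) (Finset.sum_nonneg fun i _ => indicator_nonneg (by simp) _)

lemma coordFrac_le_one (S : Set ℝ) (y : ι → ℝ) : coordFrac S y ≤ 1 := by
  unfold coordFrac
  calc (1 / (Fintype.card ι : ℝ)) * ∑ i, S.indicator 1 (y i)
      ≤ (1 / (Fintype.card ι : ℝ)) * ∑ _i : ι, 1 := by
        gcongr with i; exact indicator_le_self' (fun _ _ => zero_le_one) _
    _ ≤ 1 := by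
        rw [Finset.sum_const, Finset.card_univ, nsmul_one, one_div]
        exact inv_mul_le_one_of_le₀ le_rfl (Nat.cast_nonneg _)

lemma coordFrac_mono {S T : Set ℝ} (h : S ⊆ T) (y : ι → ℝ) : coordFrac S y ≤ coordFrac T y := by
  unfold coordFrac
  gcongr with i
  exact zero_le_one

lemma measurable_coordFrac {S : Set ℝ} (hS : MeasurableSet S) :
    Measurable (coordFrac (ι := ι) S) := by
  unfold coordFrac
  fun_prop (disch := exact hS)

variable {μ : Measure (ι → ℝ)} [IsFiniteMeasure μ]

lemma integrable_coordFrac {S : Set ℝ} (hS : MeasurableSet S) : Integrable (coordFrac S) μ :=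
  .of_bound (measurable_coordFrac hS).aestronglyMeasurable 1 (ae_of_all _ fun y => by
    rw [norm_of_nonneg (coordFrac_nonneg S y)]; exact coordFrac_le_one S y)

lemma tendsto_integral_coordFrac {α : Type*} {l : Filter α} [l.IsCountablyGenerated]
    {S : α → Set ℝ} (hS : ∀ a, MeasurableSet (S a)) {T : Set ℝ}
    (hST : ∀ c, ∀ᶠ a in l, (c ∈ S a ↔ c ∈ T)) :
    Tendsto (fun a => ∫ y, coordFrac (S a) y ∂μ) l (𝓝 (∫ y, coordFrac T y ∂μ)) := by
  refine tendsto_integral_filter_of_dominated_convergence (fun _ => 1)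
    (.of_forall fun a => (measurable_coordFrac (hS a)).aestronglyMeasurable)
    (.of_forall fun a => ae_of_all _ fun y => ?_) (integrable_const 1)
    (ae_of_all _ fun y => tendsto_const_nhds.congr' ?_)
  · rw [norm_of_nonneg (coordFrac_nonneg _ y)]; exact coordFrac_le_one _ y
  · filter_upwards [eventually_all.2 fun i => hST (y i)] with a ha
    unfold coordFrac
    congr 1
    exact Finset.sum_congr rfl fun i _ => indicator_const_eq_indicator_const (ha i).symm

lemma integral_coordFrac_le_one [IsProbabilityMeasure μ] (S : Set ℝ) :
    ∫ y, coordFrac S y ∂μ ≤ 1 := by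
  calc ∫ y, coordFrac S y ∂μ ≤ ∫ _, (1 : ℝ) ∂μ :=
        integral_mono_of_nonneg (ae_of_all _ (coordFrac_nonneg S)) (integrable_const 1)
          (ae_of_all _ (coordFrac_le_one S))
    _ = 1 := by simp

lemma antitone_integral_coordFrac_Ioi :
    Antitone fun t => ∫ y, coordFrac (Ioi t) y ∂μ := fun _ _ hst =>
  integral_mono (integrable_coordFrac measurableSet_Ioi) (integrable_coordFrac measurableSet_Ioi)
    fun y => coordFrac_mono (Ioi_subset_Ioi hst) y

lemma continuousWithinAt_integral_coordFrac_Ioi (t : ℝ) :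
    ContinuousWithinAt (fun t => ∫ y, coordFrac (Ioi t) y ∂μ) (Ioi t) t := by
  refine tendsto_integral_coordFrac (fun _ => measurableSet_Ioi) fun c => ?_
  rcases lt_or_ge t c with htc | hct
  · filter_upwards [nhdsWithin_le_nhds (eventually_lt_nhds htc)] with s hs
    simp [hs, htc]
  · filter_upwards [self_mem_nhdsWithin] with s (hs : t < s)
    simp only [mem_Ioi]; constructor <;> intro <;> linarith

lemma tendsto_integral_coordFrac_Ioi_nhdsLT (t : ℝ) :
    Tendsto (fun s => ∫ y, coordFrac (Ioi s) y ∂μ) (𝓝[<] t) (𝓝 (∫ y, coordFrac (Ici t) y ∂μ)) := by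
  refine tendsto_integral_coordFrac (fun _ => measurableSet_Ioi) fun c => ?_
  rcases lt_or_ge c t with hct | htc
  · filter_upwards [nhdsWithin_le_nhds (eventually_gt_nhds hct)] with s hs
    simp only [mem_Ioi, mem_Ici]; constructor <;> intro <;> linarith
  · filter_upwards [self_mem_nhdsWithin] with s (hs : s < t)
    simp only [mem_Ioi, mem_Ici]; constructor <;> intro <;> linarith

lemma tendsto_integral_coordFrac_Ioi_atTop :
    Tendsto (fun t => ∫ y, coordFrac (Ioi t) y ∂μ) atTop (𝓝 0) := by
  have h := tendsto_integral_coordFrac (μ := μ) (l := atTop) (S := Ioi) (T := ∅)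
    (fun _ => measurableSet_Ioi) fun c => by
      filter_upwards [eventually_ge_atTop c] with s hs; simp [hs]
  simpa [coordFrac] using h

end CoordFrac

lemma Antitone.exists_setOf_lt_eq_Iio {F : ℝ → ℝ} (hF : Antitone F)
    (hright : ∀ t, ContinuousWithinAt F (Ioi t) t) {a : ℝ} (hne : ∃ t, a < F t)
    (hle : ∃ t, F t ≤ a) : ∃ u, {t | a < F t} = Iio u := by
  obtain ⟨t₁, ht₁⟩ := hle
  have hbdd : BddAbove {t | a < F t} :=
    ⟨t₁, fun t (ht : a < F t) => le_of_lt (lt_of_not_ge fun h => (ht₁.trans_lt ht).not_ge (hF h))⟩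
  refine ⟨sSup {t | a < F t}, Set.ext fun t => ⟨fun (ht : a < F t) => ?_, fun ht => ?_⟩⟩
  · obtain ⟨s, hs, hts⟩ :=
      (((hright t).eventually (lt_mem_nhds ht)).and self_mem_nhdsWithin).exists
    exact hts.trans_le (le_csSup hbdd hs)
  · obtain ⟨s, hs, hts⟩ := exists_lt_of_lt_csSup hne ht
    exact lt_of_lt_of_le hs (hF hts.le)

section Band

variable {ι : Type*} [Fintype ι] {Ω : Type*} [MeasurableSpace Ω] {P : Measure Ω}
  [IsProbabilityMeasure P] {m : ℕ} {Y : Fin m → Ω → ι → ℝ} {μ : Measure (ι → ℝ)}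

lemma measureReal_sub_empirical_coordFrac_ge_le (hY : ∀ j, Measurable (Y j)) (hindep : iIndepFun Y P)
    (hlaw : ∀ j, P.map (Y j) = μ) (hm : 0 < m) {S : Set ℝ} (hS : MeasurableSet S) {a b s : ℝ}
    (ha : a ≤ ∫ y, coordFrac S y ∂μ) (hb : ∫ y, coordFrac S y ∂μ ≤ b) (hbpos : 0 < b)
    (hab : b - a ≤ s) :
    P.real {ω | s ≤ b - (1 / m) * ∑ j, coordFrac S (Y j ω)} ≤
      exp (-(m * (s - (b - a)) ^ 2) / (2 * b)) := by
  set W : Fin m → Ω → ℝ := fun j ω => coordFrac S (Y j ω)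
  have hW : ∀ j, Measurable (W j) := fun j => (measurable_coordFrac hS).comp (hY j)
  have hmean : ∀ j, P[W j] = ∫ y, coordFrac S y ∂μ := fun j => by
    rw [← hlaw j, integral_map (hY j).aemeasurable (measurable_coordFrac hS).aestronglyMeasurable]
  have hm' : (0 : ℝ) < m := Nat.cast_pos.2 hm
  have hsub : {ω | s ≤ b - (1 / m) * ∑ j, coordFrac S (Y j ω)} ⊆
      {ω | m * (s - (b - a)) ≤ ∑ j, (P[W j] - W j ω)} := by
    intro ω hω
    have h := mul_le_mul_of_nonneg_left (mem_ofPred_eq ▸ hω) hm'.le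
    rw [mul_sub, ← mul_assoc, mul_one_div_cancel hm'.ne', one_mul] at h
    simp only [mem_ofPred_eq, hmean, Finset.sum_sub_distrib, Finset.sum_const, Finset.card_univ,
      Fintype.card_fin, nsmul_eq_mul, W]
    nlinarith [mul_le_mul_of_nonneg_left ha hm'.le]
  calc P.real {ω | s ≤ b - (1 / m) * ∑ j, coordFrac S (Y j ω)}
      ≤ P.real {ω | m * (s - (b - a)) ≤ ∑ j, (P[W j] - W j ω)} := measureReal_mono hsub
    _ ≤ exp (-(m * (s - (b - a))) ^ 2 / (2 * (m * b))) :=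
        measureReal_sum_integral_sub_ge_le hW (hindep.comp _ fun _ => measurable_coordFrac hS)
          (fun j ω => ⟨coordFrac_nonneg _ _, coordFrac_le_one _ _⟩) (by nlinarith) (by positivity)
          (by simp only [hmean, Finset.sum_const, Finset.card_univ, Fintype.card_fin,
            nsmul_eq_mul]; gcongr)
    _ = exp (-(m * (s - (b - a)) ^ 2) / (2 * b)) := by congr 1; field_simp

theorem exists_deviation_bound_on_band [IsProbabilityMeasure μ] (hY : ∀ j, Measurable (Y j)) (hindep : iIndepFun Y P)
    (hlaw : ∀ j, P.map (Y j) = μ) (hm : 0 < m) {F : ℝ → ℝ}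
    (hF : ∀ t, F t = ∫ y, coordFrac (Ioi t) y ∂μ) {Fm : ℝ → Ω → ℝ}
    (hFm : ∀ t ω, Fm t ω = (1 / m) * ∑ j, coordFrac (Ioi t) (Y j ω)) {a b s : ℝ}
    (ha : 0 < a) (hs : 0 < s) (hab : b - a ≤ s) :
    ∃ Z : Ω → ℝ, (∀ t ω, a < F t → F t ≤ b → F t - Fm t ω ≤ Z ω) ∧
      P.real {ω | s ≤ Z ω} ≤ exp (-(m * (s - (b - a)) ^ 2) / (2 * b)) := by
  have hFeq : F = fun t => ∫ y, coordFrac (Ioi t) y ∂μ := funext hF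
  by_cases hband : ∃ t₀, a < F t₀ ∧ F t₀ ≤ b
  swap
  · refine ⟨fun _ => 0, fun t ω hta htb => (hband ⟨t, hta, htb⟩).elim, ?_⟩
    simp [hs.not_ge, (exp_pos _).le]
  obtain ⟨t₀, ht₀a, ht₀b⟩ := hband
  obtain ⟨u, hu⟩ := (hFeq ▸ antitone_integral_coordFrac_Ioi).exists_setOf_lt_eq_Iio
    (hFeq ▸ continuousWithinAt_integral_coordFrac_Ioi) ⟨t₀, ht₀a⟩
    ((hFeq ▸ tendsto_integral_coordFrac_Ioi_atTop).eventually (ge_mem_nhds ha)).exists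
  have hlt (t : ℝ) (ht : a < F t) : t < u := hu.subset ht
  -- `u` is the last point where `F` exceeds `a`; the fraction on the closed ray `Ici u` has
  -- mean `F (u-) ∈ [a, b]` and is dominated by `Fm t` for every `t` in the band.
  have hGa : a ≤ ∫ y, coordFrac (Ici u) y ∂μ :=
    ge_of_tendsto (tendsto_integral_coordFrac_Ioi_nhdsLT u) <| by
      filter_upwards [self_mem_nhdsWithin] with t (ht : t < u)
      exact ((hu.symm.subset ht : a < F t).trans_eq (hF t)).le
  have hGb : ∫ y, coordFrac (Ici u) y ∂μ ≤ b :=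
    (integral_mono (integrable_coordFrac measurableSet_Ici)
      (integrable_coordFrac measurableSet_Ioi)
      (coordFrac_mono (Ici_subset_Ioi.2 (hlt t₀ ht₀a)))).trans (hF t₀ ▸ ht₀b)
  refine ⟨fun ω => b - (1 / m) * ∑ j, coordFrac (Ici u) (Y j ω), fun t ω hta htb => ?_,
    measureReal_sub_empirical_coordFrac_ge_le hY hindep hlaw hm measurableSet_Ici hGa hGb
      ((ha.trans_le hGa).trans_le hGb) hab⟩
  rw [hFm]
  dsimp only
  gcongr with j
  exact coordFrac_mono (Ici_subset_Ioi.2 (hlt t hta)) _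

end Band

lemma exists_lt_le_of_lt_of_le {α : Type*} [LinearOrder α] {v : ℕ → α} {p : α} {N : ℕ}
    (hN : v N < p) (h0 : p ≤ v 0) : ∃ k < N, v (k + 1) < p ∧ p ≤ v k := by
  induction N with
  | zero => exact absurd (hN.trans_le h0) (lt_irrefl _)
  | succ n ih =>
    by_cases h : v n < p
    · obtain ⟨k, hk, hkp⟩ := ih h
      exact ⟨k, by omega, hkp⟩
    · exact ⟨n, by omega, hN, le_of_not_gt h⟩

lemma ite_div_sqrt_le_max {x p d M : ℝ} (hx : 0 < x) (hp : 0 ≤ p) (hdp : d ≤ p)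
    (hband : x ^ 2 < p → ∃ w, 0 < w ∧ w ^ 2 < p ∧ d ≤ w * M) :
    (if p = 0 then 0 else d / √p) ≤ max x M := by
  split_ifs with hp0
  · exact le_max_of_le_left hx.le
  rcases le_or_gt p (x ^ 2) with hpx | hpx
  · refine le_max_of_le_left ?_
    calc d / √p ≤ p / √p := by gcongr
      _ = √p := div_sqrt
      _ ≤ x := (sqrt_le_sqrt hpx).trans_eq (sqrt_sq hx.le)
  obtain ⟨w, hw, hwp, hdw⟩ := hband hpx
  rcases le_or_gt d 0 with hd | hd
  · exact (div_nonpos_of_nonpos_of_nonneg hd (sqrt_nonneg _)).trans (le_max_of_le_left hx.le)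
  refine le_max_of_le_right ?_
  calc d / √p ≤ d / w := by gcongr; exact (le_sqrt hw.le hp).2 hwp.le
    _ ≤ M := by rwa [div_le_iff₀ hw, mul_comm]

section Grid

noncomputable def grid (x : ℝ) (k : ℕ) : ℝ := max (1 - k * (x / 10)) x

variable {x : ℝ}

lemma le_grid (x : ℝ) (k : ℕ) : x ≤ grid x k := le_max_right _ _

lemma one_le_grid_zero : 1 ≤ grid x 0 := by simp [grid]

lemma grid_succ_le (hx : 0 ≤ x) (k : ℕ) : grid x (k + 1) ≤ grid x k := by
  unfold grid; gcongr; exact_mod_cast k.le_succ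

lemma grid_le_grid_succ_add (hx : 0 ≤ x) (k : ℕ) : grid x k ≤ grid x (k + 1) + x / 10 := by
  unfold grid
  rw [← max_add_add_right]
  gcongr
  · push_cast; linarith
  · linarith

lemma exists_grid_eq {m : ℕ} (hx : 0 < x) (hmx : 1 ≤ m * x ^ 2) :
    ∃ N : ℕ, 0 < N ∧ (N : ℝ) ≤ 4 * m ∧ grid x N = x := by
  have hm : (1 : ℝ) ≤ m := Nat.one_le_cast.2 (Nat.pos_of_ne_zero (by rintro rfl; norm_num at hmx))
  have hc := Nat.le_ceil (10 * (1 - x) / x)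
  refine ⟨⌈10 * (1 - x) / x⌉₊ + 1, Nat.succ_pos _, ?_, ?_⟩
  · rcases le_or_gt x 1 with hx1 | hx1
    · have hlt := Nat.ceil_lt_add_one (div_nonneg (by linarith) hx.le : 0 ≤ 10 * (1 - x) / x)
      have hquad : (10 * (1 - x) / x + 2) * x ^ 2 = 10 * x - 8 * x ^ 2 := by field_simp; ring
      have hNx : ((⌈10 * (1 - x) / x⌉₊ + 1 : ℕ) : ℝ) * x ^ 2 ≤ 4 * m * x ^ 2 := by
        push_cast
        nlinarith [sq_nonneg (x - 5 / 8)]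
      exact le_of_mul_le_mul_right hNx (by positivity)
    · rw [Nat.ceil_eq_zero.2 (div_nonpos_of_nonpos_of_nonneg (by linarith) hx.le)]
      push_cast
      linarith
  · rw [div_le_iff₀ hx] at hc
    refine max_eq_right ?_
    push_cast
    nlinarith

-- Applied to consecutive grid points `w' ≤ w`: this makes the Bernstein exponent of a band at
-- least `x²`.
lemma grid_step {w w' : ℝ} (hx : 0 < x) (hxw' : x ≤ w') (hw'w : w' ≤ w)
    (hww' : w ≤ w' + x / 10) :
    w ^ 2 - w' ^ 2 ≤ 2 * x * w' ∧ 2 * x ^ 2 * w ^ 2 ≤ (2 * x * w' - (w ^ 2 - w' ^ 2)) ^ 2 := by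
  have hδ : w ^ 2 - w' ^ 2 ≤ x / 10 * (2 * w' + x / 10) := by nlinarith
  have hL : x * (9 * w' / 5 - x / 100) ≤ 2 * x * w' - (w ^ 2 - w' ^ 2) := by nlinarith
  have hL0 : 0 ≤ x * (9 * w' / 5 - x / 100) := by nlinarith
  refine ⟨by nlinarith, ?_⟩
  calc 2 * x ^ 2 * w ^ 2 ≤ (x * (9 * w' / 5 - x / 100)) ^ 2 := by
        nlinarith [mul_le_mul hww' hww' (by linarith) (by linarith), mul_pos hx hx,
          mul_le_mul_of_nonneg_left hxw' (mul_pos hx hx).le]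
    _ ≤ _ := pow_le_pow_left₀ hL0 hL 2

lemma ite_div_sqrt_le_max_of_grid (hx : 0 < x) {N : ℕ} (hN : (Finset.range N).Nonempty)
    (hgridN : grid x N = x) {p d : ℝ} (hp : 0 ≤ p) (hp1 : p ≤ 1) (hdp : d ≤ p) {z : ℕ → ℝ}
    (hz : ∀ k, grid x (k + 1) ^ 2 < p → p ≤ grid x k ^ 2 → d ≤ z k) :
    (if p = 0 then 0 else d / √p) ≤
      max x ((Finset.range N).sup' hN fun k => z k / grid x (k + 1)) := by
  have hpos (k : ℕ) : 0 < grid x k := hx.trans_le (le_grid x k)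
  refine ite_div_sqrt_le_max hx hp hdp fun hxp => ?_
  obtain ⟨k, hk, hkp, hpk⟩ := exists_lt_le_of_lt_of_le (v := fun k => grid x k ^ 2)
    (hgridN ▸ hxp) (hp1.trans (one_le_pow₀ one_le_grid_zero))
  refine ⟨grid x (k + 1), hpos _, hkp, (hz k hkp hpk).trans ?_⟩
  rw [← div_le_iff₀' (hpos _)]
  exact Finset.le_sup' (fun k => z k / grid x (k + 1)) (Finset.mem_range.2 hk)

end Grid

section Main

variable {ι : Type*} [Fintype ι] {Ω : Type*} [MeasurableSpace Ω] {P : Measure Ω}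
  [IsProbabilityMeasure P] {m : ℕ} {Y : Fin m → Ω → ι → ℝ} {μ : Measure (ι → ℝ)}
  [IsProbabilityMeasure μ]

theorem measureReal_two_mul_le_iSup_deviation_div_sqrt_le (hY : ∀ j, Measurable (Y j))
    (hindep : iIndepFun Y P) (hlaw : ∀ j, P.map (Y j) = μ) {F : ℝ → ℝ}
    (hF : ∀ t, F t = ∫ y, coordFrac (Ioi t) y ∂μ) {Fm : ℝ → Ω → ℝ}
    (hFm : ∀ t ω, Fm t ω = (1 / m) * ∑ j, coordFrac (Ioi t) (Y j ω)) {x : ℝ} (hx : 0 < x)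
    (hmx : 1 ≤ m * x ^ 2) :
    P.real {ω | 2 * x ≤ ⨆ t, if F t = 0 then 0 else (F t - Fm t ω) / √(F t)} ≤
      4 * m * exp (-m * x ^ 2) := by
  have hm : 0 < m := Nat.pos_of_ne_zero (by rintro rfl; norm_num at hmx)
  have hgrid_pos (k : ℕ) : 0 < grid x k := hx.trans_le (le_grid x k)
  have hstep (k : ℕ) := grid_step hx (le_grid x (k + 1)) (grid_succ_le hx.le k)
    (grid_le_grid_succ_add hx.le k)
  have hF0 (t : ℝ) : 0 ≤ F t := hF t ▸ integral_nonneg fun y => coordFrac_nonneg _ y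
  have hF1 (t : ℝ) : F t ≤ 1 := hF t ▸ integral_coordFrac_le_one _
  obtain ⟨N, hN, hNm, hgridN⟩ := exists_grid_eq hx hmx
  have hNe : (Finset.range N).Nonempty := Finset.nonempty_range_iff.2 hN.ne'
  choose Z hZ hZP using fun k => exists_deviation_bound_on_band hY hindep hlaw hm hF hFm
    (pow_pos (hgrid_pos (k + 1)) 2) (by have := hgrid_pos (k + 1); positivity) (hstep k).1
  have hcover : {ω | 2 * x ≤ ⨆ t, if F t = 0 then 0 else (F t - Fm t ω) / √(F t)} ⊆
      ⋃ k ∈ Finset.range N, {ω | 2 * x * grid x (k + 1) ≤ Z k ω} := by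
    intro ω hω
    have hFm0 (t : ℝ) : 0 ≤ Fm t ω := hFm t ω ▸
      mul_nonneg (by positivity) (Finset.sum_nonneg fun j _ => coordFrac_nonneg _ _)
    have h2x := hω.trans <| ciSup_le fun t =>
      ite_div_sqrt_le_max_of_grid hx hNe hgridN (hF0 t) (hF1 t) (sub_le_self _ (hFm0 t))
        fun k => hZ k t ω
    obtain ⟨k, hk, hkM⟩ := (Finset.le_sup'_iff _).1 ((le_max_iff.1 h2x).resolve_left (by linarith))
    exact mem_iUnion₂.2 ⟨k, hk, (le_div_iff₀ (hgrid_pos _)).1 hkM⟩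
  calc P.real {ω | 2 * x ≤ ⨆ t, if F t = 0 then 0 else (F t - Fm t ω) / √(F t)}
      ≤ ∑ k ∈ Finset.range N, P.real {ω | 2 * x * grid x (k + 1) ≤ Z k ω} :=
        (measureReal_mono hcover (measure_ne_top _ _)).trans (measureReal_biUnion_finset_le _ _)
    _ ≤ ∑ k ∈ Finset.range N, exp (-m * x ^ 2) := by
        refine Finset.sum_le_sum fun k _ => (hZP k).trans (exp_le_exp.2 ?_)
        have hgk := hgrid_pos k
        rw [neg_div, neg_mul, neg_le_neg_iff, le_div_iff₀ (by positivity)]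
        nlinarith [mul_le_mul_of_nonneg_left (hstep k).2 (Nat.cast_nonneg m)]
    _ ≤ 4 * m * exp (-m * x ^ 2) := by
        rw [Finset.sum_const, Finset.card_range, nsmul_eq_mul]
        gcongr

end Main

/-- a normalized DKW-type deviation bound for i.i.d. ℝ^q-valued vectors.
For t ∈ ℝ and y ∈ ℝ^q, f_t(y) = (1/q) Σ_i 1_{y_i > t}; F(t) = E f_t(Y_1),
F_m(t) = (1/m) Σ_j f_t(Y_j). If m x² ≥ 1 then
P( sup_t (F(t) − F_m(t))/√(F(t)) ≥ 2x ) ≤ 2(2qm) e^{−m x²},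
with the supremand taken to be 0 when F(t) = 0. -/
theorem stmt11 (q m : ℕ) (hq : 0 < q) (hm : 0 < m)
    (Ω : Type) [MeasurableSpace Ω] (P : Measure Ω) [IsProbabilityMeasure P]
    (Y : Fin m → Ω → (Fin q → ℝ))
    (hYmeas : ∀ j, Measurable (Y j))
    (hindep : iIndepFun Y P)
    (hident : ∀ j : Fin m, Measure.map (Y j) P = Measure.map (Y ⟨0, hm⟩) P)
    -- f_t, F and F_m
    (f : ℝ → (Fin q → ℝ) → ℝ)
    (hf : ∀ t y, f t y = (1 / (q : ℝ)) * ∑ i : Fin q, (if t < y i then (1 : ℝ) else 0))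
    (F : ℝ → ℝ) (hF : ∀ t, F t = ∫ ω, f t (Y ⟨0, hm⟩ ω) ∂P)
    (Fm : ℝ → Ω → ℝ) (hFm : ∀ t ω, Fm t ω = (1 / (m : ℝ)) * ∑ j : Fin m, f t (Y j ω))
    (x : ℝ) (hx : 0 < x) (hmx : 1 ≤ (m : ℝ) * x ^ 2) :
    (P {ω | 2 * x ≤ ⨆ t : ℝ,
        (if F t = 0 then 0 else (F t - Fm t ω) / Real.sqrt (F t))}).toReal ≤
      2 * (2 * q * m) * Real.exp (-(m : ℝ) * x ^ 2) := by
  have := Measure.isProbabilityMeasure_map (μ := P) (hYmeas ⟨0, hm⟩).aemeasurable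
  obtain rfl : f = fun t => coordFrac (Ioi t) := by
    ext t y; simp [hf, coordFrac, indicator_apply]
  have hF' (t : ℝ) : F t = ∫ y, coordFrac (Ioi t) y ∂(P.map (Y ⟨0, hm⟩)) := by
    rw [hF, integral_map (hYmeas _).aemeasurable
      (measurable_coordFrac measurableSet_Ioi).aestronglyMeasurable]
  calc _ ≤ 4 * m * exp (-m * x ^ 2) :=
        measureReal_two_mul_le_iSup_deviation_div_sqrt_le hYmeas hindep hident hF' hFm hx hmx
    _ ≤ 2 * (2 * q * m) * exp (-m * x ^ 2) := by
        have hq' : (1 : ℝ) ≤ q := Nat.one_le_cast.2 hq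
        refine mul_le_mul_of_nonneg_right ?_ (exp_pos _).le
        nlinarith [(Nat.cast_nonneg m : (0 : ℝ) ≤ m)]
end

section
/- Let F, α, a, b, δ be real numbers with F ≥ 0, α > 0, a ≥ 0, b ≥ 0, and suppose a + b√α ≤ δ ≤ α and F ≤ α − δ + a + b√F. Then F ≤ α. -/
/-!
Subtracting the two hypotheses gives `F - α ≤ b (√F - √α)`, while `b √α ≤ α` forces `b ≤ √α`.
If `F > α`, dividing `(√F - √α)(√F + √α) ≤ b (√F - √α)` by `√F - √α > 0` gives
`√F + √α ≤ b ≤ √α`, which is impossible since `√F > 0`.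
-/

open Real

lemma le_sqrt_of_mul_sqrt_le {α b : ℝ} (hα : 0 < α) (h : b * √α ≤ α) : b ≤ √α := by
  have hs : 0 < √α := sqrt_pos.mpr hα
  refine le_of_mul_le_mul_right ?_ hs
  rwa [mul_self_sqrt hα.le]

lemma le_of_sub_le_mul_sqrt_sub {F α b : ℝ} (hα : 0 ≤ α) (hb : b ≤ √α)
    (h : F - α ≤ b * (√F - √α)) : F ≤ α := by
  by_contra! hαF
  have hsx : √α < √F := sqrt_lt_sqrt hα hαF
  have hfactor : F - α = (√F - √α) * (√F + √α) := by
    linear_combination sq_sqrt hα - sq_sqrt (hα.trans hαF.le)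
  have hsum : √F + √α ≤ b := by
    rw [hfactor, mul_comm b] at h
    exact le_of_mul_le_mul_left h (sub_pos.mpr hsx)
  linarith [sqrt_nonneg α]

theorem stmt13_general (F α a b δ : ℝ) (hα : 0 < α) (ha : 0 ≤ a)
    (h1 : a + b * Real.sqrt α ≤ δ) (h2 : δ ≤ α)
    (h3 : F ≤ α - δ + a + b * Real.sqrt F) : F ≤ α := by
  have hb : b ≤ √α := le_sqrt_of_mul_sqrt_le hα (by linarith)
  exact le_of_sub_le_mul_sqrt_sub hα.le hb (by linarith)

/-- Let F, α, a, b, δ be real numbers with F ≥ 0, α > 0, a ≥ 0, b ≥ 0,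
and suppose a + b√α ≤ δ ≤ α and F ≤ α − δ + a + b√F. Then F ≤ α. -/
theorem stmt13 (F α a b δ : ℝ) (hF : 0 ≤ F) (hα : 0 < α) (ha : 0 ≤ a) (hb : 0 ≤ b)
    (h1 : a + b * Real.sqrt α ≤ δ) (h2 : δ ≤ α)
    (h3 : F ≤ α - δ + a + b * Real.sqrt F) : F ≤ α :=
  stmt13_general F α a b δ hα ha h1 h2 h3
end

section
/- Let (a_t)_{t≥1} be a sequence of nonnegative real numbers, let γ ≥ 3/2 and c > 0, and suppose a_1 ≤ 2c and, for every t ≥ 1, a_{t+1} ≤ (1 − γ/(t+1)) a_t + c/(t+1)². Then for every t ≥ 1, a_t ≤ 2c/t. -/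
/-!
The bound propagates by induction. If the coefficient `1 - γ/(t+1)` is negative, nonnegativity of
`a t` leaves only the forcing term `c/(t+1)²`. Otherwise the bound `a t ≤ 2c/t` may be inserted,
and for `γ = 3/2` the right-hand side equals `2c/(t+1) - c/(t(t+1)²)`.
-/

lemma div_sq_le_two_mul_div {c t : ℝ} (hc : 0 ≤ c) (ht : 0 ≤ t) :
    c / (t + 1) ^ 2 ≤ 2 * c / (t + 1) := by
  rw [div_le_div_iff₀ (by positivity) (by positivity)]
  nlinarith [mul_nonneg hc ht, mul_nonneg (mul_nonneg hc ht) ht]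

lemma one_sub_three_halves_div_mul_add_le {c t : ℝ} (hc : 0 ≤ c) (ht : 0 < t) :
    (1 - 3 / 2 / (t + 1)) * (2 * c / t) + c / (t + 1) ^ 2 ≤ 2 * c / (t + 1) := by
  have margin : 2 * c / (t + 1) - ((1 - 3 / 2 / (t + 1)) * (2 * c / t) + c / (t + 1) ^ 2)
      = c / (t * (t + 1) ^ 2) := by
    field_simp
    ring
  have : 0 ≤ c / (t * (t + 1) ^ 2) := by positivity
  linarith

lemma le_two_mul_div_add_one_of_le_two_mul_div {γ c t x y : ℝ} (hγ : 3 / 2 ≤ γ) (hc : 0 ≤ c)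
    (ht : 0 < t) (hx₀ : 0 ≤ x) (hx : x ≤ 2 * c / t)
    (hy : y ≤ (1 - γ / (t + 1)) * x + c / (t + 1) ^ 2) :
    y ≤ 2 * c / (t + 1) := by
  rcases le_or_gt (1 - γ / (t + 1)) 0 with hneg | hpos
  · calc y ≤ c / (t + 1) ^ 2 := by nlinarith [mul_nonpos_of_nonpos_of_nonneg hneg hx₀]
      _ ≤ 2 * c / (t + 1) := div_sq_le_two_mul_div hc ht.le
  · have hγt : 3 / 2 / (t + 1) ≤ γ / (t + 1) := by gcongr
    calc y ≤ (1 - γ / (t + 1)) * (2 * c / t) + c / (t + 1) ^ 2 := by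
          nlinarith [mul_le_mul_of_nonneg_left hx hpos.le]
      _ ≤ (1 - 3 / 2 / (t + 1)) * (2 * c / t) + c / (t + 1) ^ 2 := by gcongr
      _ ≤ 2 * c / (t + 1) := one_sub_three_halves_div_mul_add_le hc ht

/-- Let (a_t)_{t≥1} be nonnegative reals, γ ≥ 3/2, c > 0, with a_1 ≤ 2c and
a_{t+1} ≤ (1 − γ/(t+1)) a_t + c/(t+1)² for all t ≥ 1. Then a_t ≤ 2c/t for all t ≥ 1. -/
theorem stmt14 (a : ℕ → ℝ) (γ c : ℝ) (hγ : 3 / 2 ≤ γ) (hc : 0 < c)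
    (hnn : ∀ t : ℕ, 1 ≤ t → 0 ≤ a t) (h1 : a 1 ≤ 2 * c)
    (hrec : ∀ t : ℕ, 1 ≤ t →
      a (t + 1) ≤ (1 - γ / ((t : ℝ) + 1)) * a t + c / ((t : ℝ) + 1) ^ 2) :
    ∀ t : ℕ, 1 ≤ t → a t ≤ 2 * c / (t : ℝ) := by
  intro t ht
  induction t, ht using Nat.le_induction with
  | base => simpa using h1
  | succ n hn ih =>
    push_cast
    exact le_two_mul_div_add_one_of_le_two_mul_div hγ hc.le (by exact_mod_cast hn) (hnn n hn) ih
      (hrec n hn)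
end
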